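/- Consider putative conorms on the Fano plane with a working line containing a zero conorm and a negative conorm −ε (ε > 0). The transformation adding ε to the 3 conorms on the working line and subtracting ε from the 4 conorms off it preserves the Gram matrix up to change of superbase; in particular it preserves the total determinant of the associated quadratic form. -/
import Mathlib


/-- The Gram matrix (for the basis `v₁, v₂, v₃` of a superbase `v₀, v₁, v₂, v₃`)
associated to putative conorms `p01, p02, p03, p12, p13, p23` on the Fano plane
(with the seventh conorm, at the zero point, equal to `0`):
diagonal entries `pᵢ₍ⱼₖₗ₎ = pᵢⱼ + pᵢₖ + pᵢₗ`, off-diagonal entries `-pᵢⱼ`. -/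
def conormGram (p01 p02 p03 p12 p13 p23 : ℝ) : Matrix (Fin 3) (Fin 3) ℝ :=
  !![p01 + p12 + p13, -p12, -p13;
     -p12, p02 + p12 + p23, -p23;
     -p13, -p23, p03 + p13 + p23]

/-- **The conorm reduction step preserves the determinant of the quadratic form.**
Take putative conorms with the zero conorm at the zero point of the Fano plane and a
negative conorm `p01 = -ε` (`ε > 0`); choose the working line `{0, p01, p23}` through
these two points.  Adding `ε` to the three conorms on the working line and subtracting
`ε` from the four conorms off it yields the putative conorms of a new superbase of the
same lattice (after the Fano relabelling interchanging the zero point with the `01`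
point and the `02` point with the `03` point); in particular the determinants of the
two associated 3×3 Gram matrices coincide. -/
theorem conorm_reduction_preserves_det (ε p02 p03 p12 p13 p23 : ℝ) (hε : 0 < ε) :
    (conormGram (-ε) p02 p03 p12 p13 p23).det =
      (conormGram ε (p03 - ε) (p02 - ε) (p12 - ε) (p13 - ε) (p23 + ε)).det := by
  simp [conormGram, Matrix.det_fin_three]
  ring
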